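/- Let (A, m) be a noetherian local ring, M a finitely generated A-module, and I_1, ..., I_s ideals of A. If y_1, ..., y_m is a Rees superficial sequence of (I_1, ..., I_s) with respect to M, then, setting 𝔍_i = {y_1, ..., y_m} ∩ I_i for i = 1, ..., s, one has (y_1, ..., y_m)M ∩ I_1^{n_1+1}···I_s^{n_s+1}M = Σ_{i=1}^{s} (𝔍_i) I_1^{n_1+1}···I_i^{n_i}···I_s^{n_s+1}M for all sufficiently large n_1, ..., n_s. -/

import Mathlib

open IsLocalRing

section MixedMultDefs

variable (A : Type*) [CommRing A]

/-- The length of an `A`-module `M`, defined as the height of `⊤` in the lattice of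
submodules of `M` (i.e. the supremum of lengths of chains of submodules). -/
noncomputable def modLength (M : Type*) [AddCommGroup M] [Module A M] : ℕ∞ :=
  Order.height (⊤ : Submodule A M)

/-- The length of a module as a natural number (`0` if the length is infinite). -/
noncomputable def lenNat (M : Type*) [AddCommGroup M] [Module A M] : ℕ :=
  (modLength A M).toNat

/-- The height of an ideal: the infimum of the heights of the prime ideals containing it. -/
noncomputable def idealHeight (I : Ideal A) : ℕ∞ :=
  ⨅ (p : PrimeSpectrum A) (_ : I ≤ p.asIdeal), Order.height p

/-- The Krull dimension of a module `M`, i.e. the Krull dimension of `A / Ann_A M`. -/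
noncomputable def modDim (M : Type*) [AddCommGroup M] [Module A M] : WithBot ℕ∞ :=
  ringKrullDim (A ⧸ Module.annihilator A M)

/-- `x` is a Rees superficial element of the family of ideals `I = (I 0, …, I (t-1))` with
respect to `M`, as an element of the ideal `I i`:  `x ∈ I i` and
`xM ∩ I_1^{n_1} ⋯ I_i^{n_i + 1} ⋯ I_t^{n_t} M = x I_1^{n_1} ⋯ I_i^{n_i} ⋯ I_t^{n_t} M`
for all sufficiently large `n i` and arbitrary other exponents. -/
def IsReesSuperficial (M : Type*) [AddCommGroup M] [Module A M] {t : ℕ}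
    (I : Fin t → Ideal A) (i : Fin t) (x : A) : Prop :=
  x ∈ I i ∧ ∃ N : ℕ, ∀ n : Fin t → ℕ, N ≤ n i →
    (Ideal.span {x} • (⊤ : Submodule A M)) ⊓
        ((∏ j, I j ^ (n j + if j = i then 1 else 0)) • (⊤ : Submodule A M)) =
      Ideal.span {x} • ((∏ j, I j ^ (n j)) • (⊤ : Submodule A M))

/-- `x 0, …, x (t-1)` is a Rees superficial sequence of the family `I` with respect to `M`,
where the assignment `c` records to which ideal each element of the sequence belongs:
`x i` is a Rees superficial element of `I`, as an element of `I (c i)`, with respect to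
`M / (x 0, …, x (i-1)) M`. -/
def IsReesSuperficialSeq (M : Type*) [AddCommGroup M] [Module A M] {t s : ℕ}
    (I : Fin s → Ideal A) (x : Fin t → A) (c : Fin t → Fin s) : Prop :=
  ∀ i : Fin t,
    IsReesSuperficial A
      (M ⧸ ((Ideal.span (x '' {j | (j : ℕ) < (i : ℕ)})) • (⊤ : Submodule A M)))
      I (c i) (x i)

/-- The assignment `c` has type `(k 0, …, k (s-1))`: for each `i`, exactly `k i` members of
the sequence are assigned to the ideal indexed by `i`. -/
def OfTypeCount {t s : ℕ} (c : Fin t → Fin s) (k : Fin s → ℕ) : Prop :=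
  ∀ i : Fin s, (Finset.univ.filter fun j => c j = i).card = k i

/-- The ideal generated by the members of the sequence `x` assigned (by `c`) to index `i`. -/
def jrIdeal {t s : ℕ} (x : Fin t → A) (c : Fin t → Fin s) (i : Fin s) : Ideal A :=
  Ideal.span (x '' {j | c j = i})

/-- The defining equation of a joint reduction:  all members of the sequence lie in their
assigned ideals, and `I_1^{n_1+1} ⋯ I_s^{n_s+1} M = Σ_i (𝔍_i) I_1^{n_1+1} ⋯ I_i^{n_i} ⋯
I_s^{n_s+1} M` for all sufficiently large `n_1, …, n_s`, where `𝔍_i` consists of the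
members of the sequence assigned to `I i`. -/
def IsJointReductionEq (M : Type*) [AddCommGroup M] [Module A M] {t s : ℕ}
    (I : Fin s → Ideal A) (x : Fin t → A) (c : Fin t → Fin s) : Prop :=
  (∀ j, x j ∈ I (c j)) ∧
  ∃ N : ℕ, ∀ n : Fin s → ℕ, (∀ i, N ≤ n i) →
    ((∏ i, I i ^ (n i + 1)) • (⊤ : Submodule A M)) =
      ∑ i : Fin s, jrIdeal A x c i •
        ((∏ j, I j ^ (n j + if j = i then 0 else 1)) • (⊤ : Submodule A M))

/-- A joint reduction of the family `I` with respect to `M` of type `k`. -/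
def IsJointReduction (M : Type*) [AddCommGroup M] [Module A M] {t s : ℕ}
    (I : Fin s → Ideal A) (x : Fin t → A) (c : Fin t → Fin s) (k : Fin s → ℕ) : Prop :=
  IsJointReductionEq A M I x c ∧ OfTypeCount c k

/-- `x 1, …, x d` is a system of parameters for `M`:  `d = dim M`, the `x j` lie in the
maximal ideal, and `M / (x 1, …, x d) M` has finite length. -/
def IsSOP [IsLocalRing A] (M : Type*) [AddCommGroup M] [Module A M] {d : ℕ}
    (x : Fin d → A) : Prop :=
  modDim A M = (d : ℕ∞) ∧ (∀ j, x j ∈ maximalIdeal A) ∧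
    IsFiniteLength A (M ⧸ ((Ideal.span (Set.range x)) • (⊤ : Submodule A M)))

/-- `e` is the Hilbert–Samuel multiplicity of the ideal `q` on the `d`-dimensional module
`M`: the function `n ↦ ℓ_A(M / q^n M)` is eventually given by a polynomial of degree at
most `d` with `n^d`-coefficient `e / d!`. -/
def IsHSMult (M : Type*) [AddCommGroup M] [Module A M] (q : Ideal A) (d : ℕ) (e : ℕ) :
    Prop :=
  ∃ P : Polynomial ℚ, P.natDegree ≤ d ∧
    (∃ N : ℕ, ∀ n : ℕ, N ≤ n →
      IsFiniteLength A (M ⧸ (q ^ n • (⊤ : Submodule A M))) ∧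
      (lenNat A (M ⧸ (q ^ n • (⊤ : Submodule A M))) : ℚ) = P.eval (n : ℚ)) ∧
    (e : ℚ) = P.coeff d * (Nat.factorial d : ℚ)

/-- The subquotient `J^{n_0} I_1^{n_1} ⋯ I_s^{n_s} M / J^{n_0+1} I_1^{n_1} ⋯ I_s^{n_s} M`. -/
abbrev mixedSub (M : Type*) [AddCommGroup M] [Module A M] {s : ℕ} (J : Ideal A)
    (I : Fin s → Ideal A) (n : Fin (s + 1) → ℕ) : Submodule A M :=
  (J ^ (n 0) * ∏ i : Fin s, I i ^ (n i.succ)) • (⊤ : Submodule A M)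

/-- continued -/
abbrev mixedPiece (M : Type*) [AddCommGroup M] [Module A M] {s : ℕ} (J : Ideal A)
    (I : Fin s → Ideal A) (n : Fin (s + 1) → ℕ) :=
  ↥(mixedSub A M J I n) ⧸
    (Submodule.comap (mixedSub A M J I n).subtype
      ((J ^ (n 0 + 1) * ∏ i : Fin s, I i ^ (n i.succ)) • (⊤ : Submodule A M)))

/-- `e` is the mixed multiplicity `e_A(J^{[k_0+1]}, I_1^{[k_1]}, …, I_s^{[k_s]}; M)`:
the function `(n_0, …, n_s) ↦ ℓ_A(J^{n_0} I_1^{n_1} ⋯ I_s^{n_s} M / J^{n_0+1} I_1^{n_1}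
⋯ I_s^{n_s} M)` is, for all sufficiently large `n_0, …, n_s`, given by a polynomial of
total degree at most `k_0 + k_1 + ⋯ + k_s` whose coefficient of
`n_0^{k_0} n_1^{k_1} ⋯ n_s^{k_s}` is `e / (k_0! k_1! ⋯ k_s!)`. -/
def IsMixedMult (M : Type*) [AddCommGroup M] [Module A M] {s : ℕ} (J : Ideal A)
    (I : Fin s → Ideal A) (k0 : ℕ) (k : Fin s → ℕ) (e : ℕ) : Prop :=
  ∃ P : MvPolynomial (Fin (s + 1)) ℚ, P.totalDegree ≤ k0 + ∑ i, k i ∧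
    (∃ N : ℕ, ∀ n : Fin (s + 1) → ℕ, (∀ i, N ≤ n i) →
      IsFiniteLength A (mixedPiece A M J I n) ∧
      (lenNat A (mixedPiece A M J I n) : ℚ) =
        MvPolynomial.eval (fun i => (n i : ℚ)) P) ∧
    (e : ℚ) = MvPolynomial.coeff (Finsupp.equivFunOnFinite.symm (Fin.cons k0 k)) P *
      ((Nat.factorial k0 * ∏ i, Nat.factorial (k i) : ℕ) : ℚ)

/-- `e` is the mixed multiplicity `e_A(I_1^{[k_1]}, …, I_s^{[k_s]}; M)` of a family of
`m`-primary ideals: the function `(n_1, …, n_s) ↦ ℓ_A(M / I_1^{n_1} ⋯ I_s^{n_s} M)` is, for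
all sufficiently large `n_1, …, n_s`, given by a polynomial of total degree at most
`k_1 + ⋯ + k_s` whose coefficient of `n_1^{k_1} ⋯ n_s^{k_s}` is `e / (k_1! ⋯ k_s!)`. -/
def IsMixedMultPrimary (M : Type*) [AddCommGroup M] [Module A M] {s : ℕ}
    (I : Fin s → Ideal A) (k : Fin s → ℕ) (e : ℕ) : Prop :=
  ∃ P : MvPolynomial (Fin s) ℚ, P.totalDegree ≤ ∑ i, k i ∧
    (∃ N : ℕ, ∀ n : Fin s → ℕ, (∀ i, N ≤ n i) →
      IsFiniteLength A (M ⧸ ((∏ i, I i ^ (n i)) • (⊤ : Submodule A M))) ∧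
      (lenNat A (M ⧸ ((∏ i, I i ^ (n i)) • (⊤ : Submodule A M))) : ℚ) =
        MvPolynomial.eval (fun i => (n i : ℚ)) P) ∧
    (e : ℚ) = MvPolynomial.coeff (Finsupp.equivFunOnFinite.symm k) P *
      ((∏ i, Nat.factorial (k i) : ℕ) : ℚ)

/-- The submodule `(0_M : I^∞) = ⋃_n (0_M : I^n)` of `M`. -/
def satSub (M : Type*) [AddCommGroup M] [Module A M] (I : Ideal A) : Submodule A M :=
  ⨆ n : ℕ, Submodule.torsionBySet A M ((I ^ n : Ideal A) : Set A)

/-- A polynomial function on an `A`-module `V` with values in the residue field of `A`: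
an element of the subalgebra of functions generated by the linear ones. -/
def IsPolyFun [IsLocalRing A] (V : Type*) [AddCommGroup V] [Module A V]
    (f : V → ResidueField A) : Prop :=
  f ∈ Algebra.adjoin A {g : V → ResidueField A | ∃ l : V →ₗ[A] ResidueField A, g = ⇑l}

/-- A Zariski open subset of an `A`-module `V` (for `V` a finite-dimensional vector space
over the residue field, this is the usual Zariski topology): the complement of the common
zero locus of a set of polynomial functions. -/
def IsZariskiOpen [IsLocalRing A] (V : Type*) [AddCommGroup V] [Module A V]
    (U : Set V) : Prop :=
  ∃ S : Set (V → ResidueField A), (∀ f ∈ S, IsPolyFun A V f) ∧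
    U = {v | ∃ f ∈ S, f v ≠ 0}

end MixedMultDefs

/-! Induction on `m`. Modulo `K = y₁M` the sequence `y₂, …, y_m` is again Rees superficial, so
by induction an element of `(y)M ∩ I_1^{n_1+1} ⋯ I_s^{n_s+1} M` is, modulo `K`, in the sum
formed with the `y₂, …, y_m` alone. The remaining summand lies in
`y₁M ∩ I_1^{n_1+1} ⋯ I_s^{n_s+1} M`, which is `y₁ I_1^{n_1+1} ⋯ I_c^{n_c} ⋯ I_s^{n_s+1} M` by
superficiality of `y₁ ∈ I_c`, applied with the exponent `n_j + 1` at every `j ≠ c`. -/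

section Lattice

variable {R M M' : Type*} [CommRing R] [AddCommGroup M] [Module R M] [AddCommGroup M']
  [Module R M']

theorem Submodule.finsetSum_le {ι : Type*} {s : Finset ι} {p : ι → Submodule R M}
    {P : Submodule R M} (h : ∀ i ∈ s, p i ≤ P) : ∑ i ∈ s, p i ≤ P :=
  Finset.sum_induction p (· ≤ P) (fun _ _ => sup_le) bot_le h

theorem Submodule.map_smul_top_of_surjective {f : M →ₗ[R] M'} (hf : Function.Surjective f)
    (J : Ideal R) : (J • ⊤ : Submodule R M).map f = J • ⊤ := by
  rw [Submodule.map_smul'', Submodule.map_top, LinearMap.range_eq_top.mpr hf]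

theorem Submodule.map_mkQ_sup_smul_top (J₁ J₂ : Ideal R) :
    ((J₁ ⊔ J₂) • ⊤ : Submodule R M).map (J₁ • ⊤ : Submodule R M).mkQ = J₂ • ⊤ := by
  rw [Submodule.sup_smul, Submodule.map_sup, Submodule.mkQ_map_self, bot_sup_eq,
    Submodule.map_smul_top_of_surjective (Submodule.mkQ_surjective _)]

noncomputable def Submodule.quotientSMulTopQuotientEquiv (J₁ J₂ : Ideal R) :
    ((M ⧸ (J₁ • ⊤ : Submodule R M)) ⧸ (J₂ • ⊤ : Submodule R (M ⧸ (J₁ • ⊤ : Submodule R M))))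
      ≃ₗ[R] M ⧸ ((J₁ ⊔ J₂) • ⊤ : Submodule R M) :=
  (Submodule.quotEquivOfEq _ _ (Submodule.map_mkQ_sup_smul_top J₁ J₂).symm).trans
    (Submodule.quotientQuotientEquivQuotient _ _ (Submodule.smul_mono_left le_sup_left))

theorem Submodule.inf_le_of_map_inf_le (f : M →ₗ[R] M') {L Q T T' : Submodule R M}
    (hmap : L.map f ⊓ Q.map f ≤ T.map f) (hTQ : T ≤ Q) (hTT' : T ≤ T')
    (hker : LinearMap.ker f ⊓ Q ≤ T') : L ⊓ Q ≤ T' :=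
  calc L ⊓ Q ≤ (T ⊔ LinearMap.ker f) ⊓ Q := by
        refine le_inf (fun x hx => ?_) inf_le_right
        rw [← Submodule.comap_map_eq]
        exact hmap ⟨Submodule.mem_map_of_mem hx.1, Submodule.mem_map_of_mem hx.2⟩
    _ = T ⊔ LinearMap.ker f ⊓ Q := sup_inf_assoc_of_le _ hTQ
    _ ≤ T' := sup_le hTT' hker

end Lattice

theorem mul_prod_pow_add_ite_eq {ι α : Type*} [Fintype ι] [DecidableEq ι] [CommMonoid α]
    (a : ι → α) (n : ι → ℕ) (i : ι) :
    a i * ∏ j, a j ^ (n j + if j = i then 0 else 1) = ∏ j, a j ^ (n j + 1) := by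
  calc a i * ∏ j, a j ^ (n j + if j = i then 0 else 1)
      = (∏ j, if j = i then a j else 1) * ∏ j, a j ^ (n j + if j = i then 0 else 1) := by
        rw [Finset.prod_ite_eq' Finset.univ i a, if_pos (Finset.mem_univ i)]
    _ = ∏ j, a j ^ (n j + 1) := by
        rw [← Finset.prod_mul_distrib]
        refine Finset.prod_congr rfl fun j _ => ?_
        split_ifs <;> simp [pow_succ']

theorem Fin.image_setOf_val_lt_succ {α : Type*} {m : ℕ} (y : Fin (m + 1) → α) (i : Fin m) :
    y '' {j | (j : ℕ) < (i.succ : ℕ)} = insert (y 0) (Fin.tail y '' {j | (j : ℕ) < (i : ℕ)}) := by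
  ext a
  simp [Fin.exists_fin_succ, Fin.tail, eq_comm]

section Superficial

variable {A : Type*} [CommRing A]

section JointReductionSum

variable (A) in
def jrSum (M : Type*) [AddCommGroup M] [Module A M] {t s : ℕ} (I : Fin s → Ideal A)
    (y : Fin t → A) (c : Fin t → Fin s) (n : Fin s → ℕ) : Submodule A M :=
  ∑ i : Fin s, jrIdeal A y c i •
    ((∏ j, I j ^ (n j + if j = i then 0 else 1)) • (⊤ : Submodule A M))

variable {M M' : Type*} [AddCommGroup M] [Module A M] [AddCommGroup M'] [Module A M']
  {t s : ℕ} {I : Fin s → Ideal A}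

theorem jrIdeal_le {y : Fin t → A} {c : Fin t → Fin s} (hy : ∀ j, y j ∈ I (c j)) (i : Fin s) :
    jrIdeal A y c i ≤ I i := by
  rw [jrIdeal, Ideal.span_le]
  rintro _ ⟨j, rfl, rfl⟩
  exact hy j

theorem jrIdeal_le_span_range (y : Fin t → A) (c : Fin t → Fin s) (i : Fin s) :
    jrIdeal A y c i ≤ Ideal.span (Set.range y) :=
  Ideal.span_mono (Set.image_subset_range _ _)

theorem jrIdeal_tail_le (y : Fin (t + 1) → A) (c : Fin (t + 1) → Fin s) (i : Fin s) :
    jrIdeal A (Fin.tail y) (Fin.tail c) i ≤ jrIdeal A y c i := by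
  refine Ideal.span_mono ?_
  rintro _ ⟨j, hj, rfl⟩
  exact ⟨j.succ, hj, rfl⟩

theorem span_singleton_head_le_jrIdeal (y : Fin (t + 1) → A) (c : Fin (t + 1) → Fin s) :
    Ideal.span {y 0} ≤ jrIdeal A y c (c 0) :=
  Ideal.span_mono (Set.singleton_subset_iff.mpr ⟨0, rfl, rfl⟩)

theorem jrSum_le_prod_pow_succ {y : Fin t → A} {c : Fin t → Fin s} (hy : ∀ j, y j ∈ I (c j))
    (n : Fin s → ℕ) :
    jrSum A M I y c n ≤ (∏ i, I i ^ (n i + 1)) • (⊤ : Submodule A M) := by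
  refine Submodule.finsetSum_le fun i _ => (Submodule.smul_mono_left (jrIdeal_le hy i)).trans ?_
  rw [← Submodule.smul_assoc, smul_eq_mul, mul_prod_pow_add_ite_eq]

theorem jrSum_le_span_range_smul_top (y : Fin t → A) (c : Fin t → Fin s) (n : Fin s → ℕ) :
    jrSum A M I y c n ≤ Ideal.span (Set.range y) • (⊤ : Submodule A M) :=
  Submodule.finsetSum_le fun i _ =>
    Submodule.smul_mono (jrIdeal_le_span_range y c i) le_top

theorem jrSum_tail_le (y : Fin (t + 1) → A) (c : Fin (t + 1) → Fin s) (n : Fin s → ℕ) :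
    jrSum A M I (Fin.tail y) (Fin.tail c) n ≤ jrSum A M I y c n :=
  Finset.sum_le_sum fun i _ => Submodule.smul_mono_left (jrIdeal_tail_le y c i)

theorem smul_le_jrSum (y : Fin t → A) (c : Fin t → Fin s) (n : Fin s → ℕ) (i : Fin s) :
    jrIdeal A y c i • ((∏ j, I j ^ (n j + if j = i then 0 else 1)) • (⊤ : Submodule A M)) ≤
      jrSum A M I y c n :=
  Finset.single_le_sum_of_canonicallyOrdered
    (f := fun i => jrIdeal A y c i • ((∏ j, I j ^ (n j + if j = i then 0 else 1)) • ⊤))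
    (Finset.mem_univ i)

theorem span_singleton_head_smul_le_jrSum (y : Fin (t + 1) → A) (c : Fin (t + 1) → Fin s)
    (n : Fin s → ℕ) :
    Ideal.span {y 0} • ((∏ j, I j ^ (n j + if j = c 0 then 0 else 1)) • (⊤ : Submodule A M)) ≤
      jrSum A M I y c n :=
  (Submodule.smul_mono_left (span_singleton_head_le_jrIdeal y c)).trans
    (smul_le_jrSum y c n (c 0))

theorem jrSum_le_map {f : M →ₗ[A] M'} (hf : Function.Surjective f) (y : Fin t → A)
    (c : Fin t → Fin s) (n : Fin s → ℕ) :
    jrSum A M' I y c n ≤ (jrSum A M I y c n).map f := by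
  refine Submodule.finsetSum_le fun i _ => ?_
  rw [← Submodule.map_smul_top_of_surjective hf, ← Submodule.map_smul'']
  exact Submodule.map_mono (smul_le_jrSum y c n i)

end JointReductionSum

variable {M M' : Type*} [AddCommGroup M] [Module A M] [AddCommGroup M'] [Module A M'] {s : ℕ}
  {I : Fin s → Ideal A}

namespace IsReesSuperficial

variable {i : Fin s} {x : A}

theorem of_linearEquiv (e : M ≃ₗ[A] M') (h : IsReesSuperficial A M I i x) :
    IsReesSuperficial A M' I i x := by
  obtain ⟨hx, N, hN⟩ := h
  refine ⟨hx, N, fun n hn => ?_⟩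
  simpa only [Submodule.map_inf _ e.injective, Submodule.map_smul'',
    Submodule.map_smul_top_of_surjective e.surjective] using
    congrArg (Submodule.map (e : M →ₗ[A] M')) (hN n hn)

theorem exists_inf_prod_pow_succ_eq (h : IsReesSuperficial A M I i x) :
    ∃ N : ℕ, ∀ n : Fin s → ℕ, N ≤ n i →
      (Ideal.span {x} • (⊤ : Submodule A M)) ⊓ ((∏ j, I j ^ (n j + 1)) • ⊤) =
        Ideal.span {x} • ((∏ j, I j ^ (n j + if j = i then 0 else 1)) • ⊤) := by
  obtain ⟨-, N, hN⟩ := h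
  refine ⟨N, fun n hn => ?_⟩
  convert hN (fun j => n j + if j = i then 0 else 1) (by simpa using hn) using 5 with j
  split_ifs <;> rfl

end IsReesSuperficial

namespace IsReesSuperficialSeq

variable {m : ℕ} {y : Fin (m + 1) → A} {c : Fin (m + 1) → Fin s}

theorem head (h : IsReesSuperficialSeq A M I y c) : IsReesSuperficial A M I (c 0) (y 0) := by
  refine (h 0).of_linearEquiv (Submodule.quotEquivOfEqBot _ ?_)
  simp

theorem tail (h : IsReesSuperficialSeq A M I y c) :
    IsReesSuperficialSeq A (M ⧸ (Ideal.span {y 0} • (⊤ : Submodule A M))) I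
      (Fin.tail y) (Fin.tail c) := fun i =>
  (h i.succ).of_linearEquiv <| (Submodule.quotEquivOfEq _ _ (by
    rw [Fin.image_setOf_val_lt_succ, Ideal.span_insert])).trans
      (Submodule.quotientSMulTopQuotientEquiv _ _).symm

end IsReesSuperficialSeq

theorem map_mkQ_span_range_smul_top {m : ℕ} (y : Fin (m + 1) → A) :
    (Ideal.span (Set.range y) • (⊤ : Submodule A M)).map
        (Ideal.span {y 0} • (⊤ : Submodule A M)).mkQ =
      Ideal.span (Set.range (Fin.tail y)) • ⊤ := by
  have hrange : Set.range y = insert (y 0) (Set.range (Fin.tail y)) := by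
    rw [← Fin.range_cons, Fin.cons_self_tail]
  rw [hrange, Ideal.span_insert, Submodule.map_mkQ_sup_smul_top]

theorem IsReesSuperficialSeq.exists_inf_eq_jrSum {m : ℕ} {y : Fin m → A} {c : Fin m → Fin s}
    (h : IsReesSuperficialSeq A M I y c) :
    ∃ N : ℕ, ∀ n : Fin s → ℕ, (∀ i, N ≤ n i) →
      (Ideal.span (Set.range y) • (⊤ : Submodule A M)) ⊓ ((∏ i, I i ^ (n i + 1)) • ⊤) =
        jrSum A M I y c n := by
  induction m generalizing M with
  | zero =>
    refine ⟨0, fun n _ => ?_⟩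
    have hJ (i : Fin s) : jrIdeal A y c i = ⊥ := by simp [jrIdeal, Set.eq_empty_of_isEmpty]
    simp only [jrSum, hJ, Set.range_eq_empty, Ideal.span_empty, Submodule.bot_smul, bot_inf_eq]
    exact Finset.sum_const_zero.symm
  | succ m ih =>
    obtain ⟨N₁, hN₁⟩ := ih h.tail
    obtain ⟨N₀, hN₀⟩ := h.head.exists_inf_prod_pow_succ_eq
    have hy : ∀ j, y j ∈ I (c j) := fun j => (h j).1
    refine ⟨max N₁ N₀, fun n hn => le_antisymm ?_
      (le_inf (jrSum_le_span_range_smul_top y c n) (jrSum_le_prod_pow_succ hy n))⟩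
    set K := Ideal.span {y 0} • (⊤ : Submodule A M)
    refine Submodule.inf_le_of_map_inf_le K.mkQ ?_ (jrSum_le_prod_pow_succ (fun j => hy j.succ) n)
      (jrSum_tail_le y c n) ?_
    · rw [map_mkQ_span_range_smul_top, Submodule.map_smul_top_of_surjective K.mkQ_surjective,
        hN₁ n fun i => le_of_max_le_left (hn i)]
      exact jrSum_le_map K.mkQ_surjective _ _ n
    · rw [Submodule.ker_mkQ, hN₀ n (le_of_max_le_right (hn (c 0)))]
      exact span_singleton_head_smul_le_jrSum y c n

end Superficial

theorem reesSuperficialSeq_inter_eq_general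
    (A : Type*) [CommRing A]
    (M : Type*) [AddCommGroup M] [Module A M]
    {s : ℕ} (I : Fin s → Ideal A)
    {m : ℕ} (y : Fin m → A) (c : Fin m → Fin s)
    (hseq : IsReesSuperficialSeq A M I y c) :
    ∃ N : ℕ, ∀ n : Fin s → ℕ, (∀ i, N ≤ n i) →
      (Ideal.span (Set.range y) • (⊤ : Submodule A M)) ⊓
          ((∏ i, I i ^ (n i + 1)) • (⊤ : Submodule A M)) =
        ∑ i : Fin s, jrIdeal A y c i •
          ((∏ j, I j ^ (n j + if j = i then 0 else 1)) • (⊤ : Submodule A M)) :=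
  hseq.exists_inf_eq_jrSum

/-- equation (1) in Proposition 2.6.  If `y 1, …, y m` is a Rees
superficial sequence of `(I 1, …, I s)` with respect to `M`, then
`(y 1, …, y m) M ∩ I_1^{n_1+1} ⋯ I_s^{n_s+1} M
  = Σ_i (𝔍_i) I_1^{n_1+1} ⋯ I_i^{n_i} ⋯ I_s^{n_s+1} M`
for all sufficiently large `n_1, …, n_s`, where `𝔍_i = {y 1, …, y m} ∩ I i`. -/
theorem reesSuperficialSeq_inter_eq
    (A : Type*) [CommRing A] [IsNoetherianRing A] [IsLocalRing A]
    (M : Type*) [AddCommGroup M] [Module A M] [Module.Finite A M]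
    {s : ℕ} (I : Fin s → Ideal A)
    {m : ℕ} (y : Fin m → A) (c : Fin m → Fin s)
    (hseq : IsReesSuperficialSeq A M I y c) :
    ∃ N : ℕ, ∀ n : Fin s → ℕ, (∀ i, N ≤ n i) →
      (Ideal.span (Set.range y) • (⊤ : Submodule A M)) ⊓
          ((∏ i, I i ^ (n i + 1)) • (⊤ : Submodule A M)) =
        ∑ i : Fin s, jrIdeal A y c i •
          ((∏ j, I j ^ (n j + if j = i then 0 else 1)) • (⊤ : Submodule A M)) :=
  reesSuperficialSeq_inter_eq_general A M I y c hseq
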